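/- Let d ≥ 1 be an integer, M > 0, and let S ⊂ ℝ^d be a bounded measurable set with μ(S) = M^d, equipped with the uniform density f = M^{−d} on S. Let x_1, …, x_n ∈ ℝ^d be distinct points with Voronoi cells V_i = {u ∈ S : ‖u − x_i‖ ≤ ‖u − x_j‖ for all j ∈ {1,…,n}}. Suppose there is a bounded measurable set T ⊂ ℝ^d with 0 < μ(T) < ∞ such that for each i there is a linear isometry O_i of ℝ^d with V_i = x_i + O_i(T − c(T)), where c(T) is the centroid of T. Then R̃(X) = (1/d)·log(n/M^d) + ζ(T). -/

import Mathlib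

/-!
The Voronoi cells are `n` congruent copies `X i + O i (T - c(T))` of `T`; two of them meet only
inside the perpendicular bisector of their sites, a null set, so they tile `S` up to measure zero
and `M ^ d = μ(S) = n μ(T)`. On the `i`-th cell the nearest site is `X i`, and the measure-preserving
change of variables `u = X i + O i (v - c(T))` turns the integral of `log (1 / ‖u - X i‖)` over the
cell into `∫_T log (1 / ‖v - c(T)‖)`. Both sides of the identity then reduce to
`μ(T)⁻¹ ∫_T log (1 / ‖v - c(T)‖)`: the term `(1/d) log (n / M ^ d) = -(1/d) log μ(T)` cancels the
logarithmic term of `ζ(T)`.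
-/

open MeasureTheory Real
open scoped ENNReal BigOperators

/-- The centroid `c(A)` of a set `A`. -/
noncomputable def centroid (d : ℕ) (A : Set (EuclideanSpace ℝ (Fin d))) :
    EuclideanSpace ℝ (Fin d) :=
  (volume A).toReal⁻¹ • ∫ u in A, u

/-- The normalized logarithmic moment
`ζ(A) = μ(A)⁻¹ ∫_{A - c(A)} log (1/‖u‖) du + d⁻¹ log μ(A)`. -/
noncomputable def zeta (d : ℕ) (A : Set (EuclideanSpace ℝ (Fin d))) : ℝ :=
  (volume A).toReal⁻¹ * (∫ u in (fun v => v - centroid d A) '' A, Real.log (1 / ‖u‖))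
    + (d : ℝ)⁻¹ * Real.log (volume A).toReal

section Voronoi

variable {ι E : Type*} [NormedAddCommGroup E]

def voronoiCell (S : Set E) (X : ι → E) (i : ι) : Set E :=
  {u ∈ S | ∀ j, ‖u - X i‖ ≤ ‖u - X j‖}

theorem iUnion_voronoiCell [Finite ι] [Nonempty ι] (S : Set E) (X : ι → E) :
    ⋃ i, voronoiCell S X i = S := by
  refine Set.Subset.antisymm (Set.iUnion_subset fun i u hu => hu.1) fun u hu => ?_
  obtain ⟨i, hi⟩ := Finite.exists_min fun j => ‖u - X j‖
  exact Set.mem_iUnion.2 ⟨i, hu, hi⟩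

theorem iInf_norm_sub_eq_of_mem_voronoiCell {S : Set E} {X : ι → E} {i : ι} {u : E}
    (hu : u ∈ voronoiCell S X i) : ⨅ j, ‖u - X j‖ = ‖u - X i‖ :=
  have : Nonempty ι := ⟨i⟩
  le_antisymm (ciInf_le ⟨0, Set.forall_mem_range.2 fun _ => norm_nonneg _⟩ i)
    (le_ciInf hu.2)

theorem pairwise_aedisjoint_voronoiCell [InnerProductSpace ℝ E] [FiniteDimensional ℝ E]
    [MeasurableSpace E] [BorelSpace E] (μ : Measure E) [μ.IsAddHaarMeasure] (S : Set E)
    {X : ι → E} (hX : Function.Injective X) :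
    Pairwise (Function.onFun (AEDisjoint μ) (voronoiCell S X)) := by
  intro i j hij
  refine measure_mono_null (fun u ⟨hi, hj⟩ => ?_)
    (Measure.addHaar_affineSubspace μ (AffineSubspace.perpBisector (X i) (X j))
      (by simpa [AffineSubspace.perpBisector_eq_top] using hX.ne hij))
  refine AffineSubspace.mem_perpBisector_iff_dist_eq.2 ?_
  rw [dist_eq_norm, dist_eq_norm]
  exact le_antisymm (hi.2 j) (hj.2 i)

end Voronoi

section CongruentCopies

variable {ι α β F : Type*} [Fintype ι] [MeasurableSpace α] [MeasurableSpace β]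
  {μ : Measure α} {ν : Measure β} {φ : ι → α → β} {T : Set α}

theorem measure_iUnion_image_of_measurePreserving (hφ : ∀ i, MeasurePreserving (φ i) μ ν)
    (hemb : ∀ i, MeasurableEmbedding (φ i)) (hT : MeasurableSet T)
    (hdisj : Pairwise (Function.onFun (AEDisjoint ν) fun i => φ i '' T)) :
    ν (⋃ i, φ i '' T) = Fintype.card ι * μ T := by
  rw [measure_iUnion₀ hdisj fun i => ((hemb i).measurableSet_image.2 hT).nullMeasurableSet,
    tsum_fintype]
  have hcopy : ∀ i, ν (φ i '' T) = μ T := fun i => by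
    rw [← (hφ i).measure_preimage_emb (hemb i), Set.preimage_image_eq _ (hemb i).injective]
  simp [hcopy]

theorem setIntegral_iUnion_image_of_measurePreserving [NormedAddCommGroup F] [NormedSpace ℝ F]
    (hφ : ∀ i, MeasurePreserving (φ i) μ ν) (hemb : ∀ i, MeasurableEmbedding (φ i))
    (hT : MeasurableSet T) (hdisj : Pairwise (Function.onFun (AEDisjoint ν) fun i => φ i '' T))
    {g : β → F} {h : α → F} (hgh : ∀ i, ∀ v ∈ T, g (φ i v) = h v) :
    ∫ u in ⋃ i, φ i '' T, g u ∂ν = Fintype.card ι • ∫ v in T, h v ∂μ := by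
  have hcopy : ∀ i, ∫ u in φ i '' T, g u ∂ν = ∫ v in T, h v ∂μ := fun i => by
    rw [(hφ i).setIntegral_image_emb (hemb i)]
    exact setIntegral_congr_fun hT (hgh i)
  have hint : ∀ i, IntegrableOn g (φ i '' T) ν ↔ IntegrableOn h T μ := fun i => by
    rw [(hφ i).integrableOn_image (hemb i)]
    exact integrableOn_congr_fun (hgh i) hT
  by_cases hh : IntegrableOn h T μ
  · rw [integral_iUnion_ae (fun i => ((hemb i).measurableSet_image.2 hT).nullMeasurableSet) hdisj
      (integrableOn_finite_iUnion.2 fun i => (hint i).2 hh), tsum_fintype]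
    simp [hcopy]
  · rw [integral_undef hh, smul_zero]
    rcases isEmpty_or_nonempty ι with _ | ⟨⟨i⟩⟩
    · simp
    · refine integral_undef fun hg => hh ((hint i).1 ?_)
      exact IntegrableOn.mono_set hg (Set.subset_iUnion (fun i => φ i '' T) i)

end CongruentCopies

section Congruence

variable {E : Type*} [NormedAddCommGroup E] [InnerProductSpace ℝ E] [MeasurableSpace E]
  [BorelSpace E]

theorem measurableEmbedding_add_linearIsometryEquiv_sub (x c : E) (O : E ≃ₗᵢ[ℝ] E) :
    MeasurableEmbedding fun v => x + O (v - c) :=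
  (MeasurableEquiv.addLeft x).measurableEmbedding.comp
    (O.toMeasurableEquiv.measurableEmbedding.comp (MeasurableEquiv.subRight c).measurableEmbedding)

theorem measurePreserving_add_linearIsometryEquiv_sub [FiniteDimensional ℝ E] (x c : E)
    (O : E ≃ₗᵢ[ℝ] E) : MeasurePreserving (fun v => x + O (v - c)) :=
  (measurePreserving_add_left volume x).comp
    (O.measurePreserving.comp (measurePreserving_sub_right volume c))

end Congruence

theorem zeta_eq_setIntegral_sub_centroid (d : ℕ) (A : Set (EuclideanSpace ℝ (Fin d))) :
    zeta d A = (volume A).toReal⁻¹ * (∫ v in A, Real.log (1 / ‖v - centroid d A‖))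
      + (d : ℝ)⁻¹ * Real.log (volume A).toReal := by
  rw [zeta, (measurePreserving_sub_right volume _).setIntegral_image_emb
    (MeasurableEquiv.subRight _).measurableEmbedding]

theorem congruent_voronoi_rate_general (d : ℕ) (M : ℝ) (hM : 0 < M)
    (S : Set (EuclideanSpace ℝ (Fin d)))
    (hSvol : volume S = ENNReal.ofReal (M ^ d))
    (n : ℕ) (hn : 1 ≤ n) (X : Fin n → EuclideanSpace ℝ (Fin d))
    (hX : Function.Injective X)
    (V : Fin n → Set (EuclideanSpace ℝ (Fin d)))
    (hV : ∀ i, V i = {u ∈ S | ∀ j, ‖u - X i‖ ≤ ‖u - X j‖})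
    (T : Set (EuclideanSpace ℝ (Fin d)))
    (hTm : MeasurableSet T)
    (O : Fin n → (EuclideanSpace ℝ (Fin d) ≃ₗᵢ[ℝ] EuclideanSpace ℝ (Fin d)))
    (hcong : ∀ i, V i = (fun v => X i + O i (v - centroid d T)) '' T) :
    (∫ u in S, Real.log (1 / ⨅ i, ‖u - X i‖) / M ^ d) =
      (1 / d) * Real.log (n / M ^ d) + zeta d T := by
  have : NeZero n := ⟨by omega⟩
  set c := centroid d T
  set φ : Fin n → EuclideanSpace ℝ (Fin d) → EuclideanSpace ℝ (Fin d) :=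
    fun i v => X i + O i (v - c)
  have hφ i := measurePreserving_add_linearIsometryEquiv_sub (X i) c (O i)
  have hemb i := measurableEmbedding_add_linearIsometryEquiv_sub (X i) c (O i)
  have hcells : voronoiCell S X = fun i => φ i '' T := funext fun i => (hV i).symm.trans (hcong i)
  have hS : S = ⋃ i, φ i '' T := by rw [← hcells, iUnion_voronoiCell]
  have hdisj : Pairwise (Function.onFun (AEDisjoint volume) fun i => φ i '' T) :=
    hcells ▸ pairwise_aedisjoint_voronoiCell volume S hX
  have hvol : M ^ d = n * (volume T).toReal := by
    rw [← ENNReal.toReal_ofReal (pow_pos hM d).le, ← hSvol, hS,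
      measure_iUnion_image_of_measurePreserving hφ hemb hTm hdisj, ENNReal.toReal_mul]
    simp
  have hint : ∫ u in S, Real.log (1 / ⨅ i, ‖u - X i‖)
      = n * ∫ v in T, Real.log (1 / ‖v - c‖) := by
    rw [hS, setIntegral_iUnion_image_of_measurePreserving hφ hemb hTm hdisj, Fintype.card_fin,
      nsmul_eq_mul]
    intro i v hv
    have hmem : φ i v ∈ voronoiCell S X i := hcells ▸ Set.mem_image_of_mem _ hv
    show log (1 / ⨅ j, ‖φ i v - X j‖) = _
    rw [iInf_norm_sub_eq_of_mem_voronoiCell hmem]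
    simp only [φ, add_sub_cancel_left, LinearIsometryEquiv.norm_map]
  rw [integral_div, hint, zeta_eq_setIntegral_sub_centroid, hvol,
    mul_div_mul_left _ _ (NeZero.ne (n : ℝ)), div_mul_cancel_left₀ (NeZero.ne (n : ℝ)), log_inv]
  ring

theorem congruent_voronoi_rate (d : ℕ) (hd : 1 ≤ d) (M : ℝ) (hM : 0 < M)
    (S : Set (EuclideanSpace ℝ (Fin d))) (hSb : Bornology.IsBounded S)
    (hSm : MeasurableSet S) (hSvol : volume S = ENNReal.ofReal (M ^ d))
    (n : ℕ) (hn : 1 ≤ n) (X : Fin n → EuclideanSpace ℝ (Fin d))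
    (hX : Function.Injective X)
    (V : Fin n → Set (EuclideanSpace ℝ (Fin d)))
    (hV : ∀ i, V i = {u ∈ S | ∀ j, ‖u - X i‖ ≤ ‖u - X j‖})
    (T : Set (EuclideanSpace ℝ (Fin d))) (hTb : Bornology.IsBounded T)
    (hTm : MeasurableSet T) (hT0 : volume T ≠ 0) (hTtop : volume T ≠ ⊤)
    (O : Fin n → (EuclideanSpace ℝ (Fin d) ≃ₗᵢ[ℝ] EuclideanSpace ℝ (Fin d)))
    (hcong : ∀ i, V i = (fun v => X i + O i (v - centroid d T)) '' T) :
    (∫ u in S, Real.log (1 / ⨅ i, ‖u - X i‖) / M ^ d) =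
      (1 / d) * Real.log (n / M ^ d) + zeta d T :=
  congruent_voronoi_rate_general d M hM S hSvol n hn X hX V hV T hTm O hcong
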